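/- arXiv:2108.04383 — 3 statements merged into one kernel-verified Lean document; each statement's English description precedes it below -/
import Mathlib

section
/- Let H be a CNP space on a set X with kernel k, let h : X → ℂ be a densely defined multiplier with associated closed operator T, T* its adjoint, and let (A, B) = ((a_i)_{i∈I}, (b_i)_{i∈I}) be a Beurling pair for h. For y ∈ X define g_y(x) = (Σ_{i∈I} a_i(x)·conj(a_i(y)))·k(x,y) and G_y(x) = (1 − Σ_{i∈I} b_i(x)·conj(b_i(y)))·k(x,y) (these series converge). Then: (i) g_y ∈ Dom T and for every f ∈ Dom T, ⟪f, g_y⟫ + ⟪T f, T g_y⟫ = f(y); (ii) G_y ∈ Dom T* and for every f ∈ Dom T*, ⟪f, G_y⟫ + ⟪T* f, T* G_y⟫ = f(y). That is, g_y and G_y are the reproducing kernels at y for Dom T and Dom T* in their respective graph inner products. -/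
noncomputable section

open scoped ComplexConjugate ENNReal

local notation "⟪" x ", " y "⟫" => @inner ℂ _ _ x y

/-- A reproducing kernel Hilbert space of `ℂ`-valued functions on a set `X`: a complex Hilbert
space `H` together with an injective linear map realizing its elements as functions `X → ℂ`,
such that every point evaluation is given by inner product against a kernel vector
(equivalently, every evaluation functional is bounded).  Here `⟪kernel x, f⟫ = f x` in
Mathlib's convention (inner products linear in the second variable), i.e. `⟪f, k_x⟫ = f(x)`
in the convention of the paper. -/
structure RKHSpace (X : Type) (H : Type) [NormedAddCommGroup H] [InnerProductSpace ℂ H]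
    [CompleteSpace H] where
  toFun : H →ₗ[ℂ] (X → ℂ)
  injective : Function.Injective toFun
  kernel : X → H
  reproducing : ∀ (f : H) (x : X), ⟪kernel x, f⟫ = toFun f x

variable {X H : Type} [NormedAddCommGroup H] [InnerProductSpace ℂ H] [CompleteSpace H]

namespace RKHSpace

/-- The reproducing kernel `k(x, y) = ⟪k_y, k_x⟫` (paper convention), which equals
`⟪kernel x, kernel y⟫` in Mathlib's convention. -/
def kFun (R : RKHSpace X H) (x y : X) : ℂ := ⟪R.kernel x, R.kernel y⟫

/-- `φ : X → ℂ` is a multiplier of the RKHSpace: `φ · f ∈ H` for every `f ∈ H`. -/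
def IsMult (R : RKHSpace X H) (φ : X → ℂ) : Prop :=
  ∀ f : H, ∃ g : H, R.toFun g = fun x => φ x * R.toFun f x

/-- `M : H →L[ℂ] H` is the bounded multiplication operator induced by the multiplier `φ`. -/
def IsMultOp (R : RKHSpace X H) (φ : X → ℂ) (M : H →L[ℂ] H) : Prop :=
  ∀ f : H, R.toFun (M f) = fun x => φ x * R.toFun f x

/-- `H` is a complete Nevanlinna-Pick space: its kernel has the form
`k(x,y) = (1 - ⟨u(x), u(y)⟩)⁻¹` for an injective `u : X → ℓ²(I)` with `‖u x‖ < 1`;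
moreover (as noted in the paper) the constant functions belong to `H`. -/
def IsCNP (R : RKHSpace X H) : Prop :=
  (∃ (I : Type) (u : X → lp (fun _ : I => ℂ) 2),
      Function.Injective u ∧ (∀ x, ‖u x‖ < 1) ∧
      ∀ x y : X, R.kFun x y = (1 - ⟪u y, u x⟫)⁻¹) ∧
    ∀ c : ℂ, ∃ g : H, R.toFun g = fun _ => c

/-- The maximal domain `{f ∈ H : h·f ∈ H}` of multiplication by `h`. -/
def mulDomain (R : RKHSpace X H) (h : X → ℂ) : Submodule ℂ H where
  carrier := {f : H | ∃ g : H, R.toFun g = fun x => h x * R.toFun f x}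
  add_mem' := by
    rintro f₁ f₂ ⟨g₁, hg₁⟩ ⟨g₂, hg₂⟩
    refine ⟨g₁ + g₂, ?_⟩
    ext x
    simp only [map_add, Pi.add_apply, hg₁, hg₂]
    ring
  zero_mem' := ⟨0, by ext x; simp⟩
  smul_mem' := by
    rintro c f ⟨g, hg⟩
    refine ⟨c • g, ?_⟩
    ext x
    simp only [map_smul, Pi.smul_apply, hg, smul_eq_mul]
    ring

theorem mem_mulDomain {R : RKHSpace X H} {h : X → ℂ} {f : H} :
    f ∈ R.mulDomain h ↔ ∃ g : H, R.toFun g = fun x => h x * R.toFun f x := Iff.rfl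

/-- Multiplication by `h` as a partially defined linear operator on `H`, with its
maximal domain. -/
def mulOp (R : RKHSpace X H) (h : X → ℂ) : H →ₗ.[ℂ] H where
  domain := R.mulDomain h
  toFun :=
    { toFun := fun f => Classical.choose (mem_mulDomain.mp f.2)
      map_add' := by
        intro f₁ f₂
        apply R.injective
        rw [map_add, Classical.choose_spec (mem_mulDomain.mp f₁.2),
          Classical.choose_spec (mem_mulDomain.mp f₂.2),
          Classical.choose_spec (mem_mulDomain.mp (f₁ + f₂).2)]
        ext x
        simp only [Submodule.coe_add, map_add, Pi.add_apply]
        ring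
      map_smul' := by
        intro c f
        apply R.injective
        rw [RingHom.id_apply, map_smul,
          Classical.choose_spec (mem_mulDomain.mp f.2),
          Classical.choose_spec (mem_mulDomain.mp (c • f).2)]
        ext x
        simp only [Submodule.coe_smul, map_smul, Pi.smul_apply, smul_eq_mul]
        ring }

theorem mulOp_apply (R : RKHSpace X H) (h : X → ℂ) (f : (R.mulOp h).domain) :
    R.toFun (R.mulOp h f) = fun x => h x * R.toFun (f : H) x :=
  Classical.choose_spec (mem_mulDomain.mp f.2)

/-- A densely defined operator `T` in `H` is affiliated to `Mult H` if for every `f ∈ Dom T`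
and every multiplier `φ` one has `φ·f ∈ Dom T` and `T(φ·f) = φ·(T f)`. -/
def Affiliated (R : RKHSpace X H) (T : H →ₗ.[ℂ] H) : Prop :=
  ∀ (φ : X → ℂ), R.IsMult φ →
    ∀ (f : T.domain) (g : H), R.toFun g = (fun x => φ x * R.toFun (f : H) x) →
      ∃ hg : g ∈ T.domain, R.toFun (T ⟨g, hg⟩) = fun x => φ x * R.toFun (T f) x

/-- A representing pair for a densely defined multiplier `h`: nonzero multipliers `a, b`
with `b = a·h` such that the column `(a, b)` is contractive. -/
def IsRepPair (R : RKHSpace X H) (h : X → ℂ) (a b : X → ℂ) : Prop :=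
  R.IsMult a ∧ R.IsMult b ∧ a ≠ 0 ∧ b ≠ 0 ∧ (∀ x, b x = a x * h x) ∧
    ∀ (f fa fb : H),
      R.toFun fa = (fun x => a x * R.toFun f x) →
      R.toFun fb = (fun x => b x * R.toFun f x) →
      ‖fa‖ ^ 2 + ‖fb‖ ^ 2 ≤ ‖f‖ ^ 2

/-- A vector `f ∈ H` is cyclic if `{φ·f : φ ∈ Mult H}` spans a dense subspace of `H`. -/
def IsCyclicVec (R : RKHSpace X H) (f : H) : Prop :=
  Dense ((Submodule.span ℂ {g : H | ∃ φ : X → ℂ, R.IsMult φ ∧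
    R.toFun g = fun x => φ x * R.toFun f x} : Submodule ℂ H) : Set H)

/-- `(A, B) = ((a_i), (b_i))` together with the operator `MΘ` form a Beurling pair for the
densely defined multiplier `h`: the map `F ↦ (Σ a_i F_i, Σ b_i F_i)` from `ℓ²(I; H)` to
`H ⊕ H` is a partial isometry whose range is exactly the graph of `T = M_h`. -/
def IsBeurlingOp (R : RKHSpace X H) (h : X → ℂ) {I : Type} (A B : I → X → ℂ)
    (MΘ : lp (fun _ : I => H) 2 →L[ℂ] WithLp 2 (H × H)) : Prop :=
  (∀ (F : lp (fun _ : I => H) 2) (x : X),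
      HasSum (fun i => A i x * R.toFun (F i) x)
        (R.toFun ((WithLp.equiv 2 (H × H)) (MΘ F)).1 x) ∧
      HasSum (fun i => B i x * R.toFun (F i) x)
        (R.toFun ((WithLp.equiv 2 (H × H)) (MΘ F)).2 x)) ∧
  (∀ F : lp (fun _ : I => H) 2, F ∈ (LinearMap.ker (MΘ : lp (fun _ : I => H) 2 →ₗ[ℂ] WithLp 2 (H × H)))ᗮ → ‖MΘ F‖ = ‖F‖) ∧
  (∀ p : H × H, p ∈ (R.mulOp h).graph ↔ ∃ F, (WithLp.equiv 2 (H × H)) (MΘ F) = p)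

end RKHSpace

lemma aux_partial_isometry {E F : Type*} [NormedAddCommGroup E] [InnerProductSpace ℂ E]
    [CompleteSpace E] [NormedAddCommGroup F] [InnerProductSpace ℂ F] [CompleteSpace F]
    (V : E →L[ℂ] F) (hV : ∀ f ∈ (LinearMap.ker (V : E →ₗ[ℂ] F))ᗮ, ‖V f‖ = ‖f‖) {q : F}
    (hq : ∃ f, V f = q) : V (ContinuousLinearMap.adjoint V q) = q := by
  obtain ⟨f, rfl⟩ := hq
  haveI : CompleteSpace (LinearMap.ker (V : E →ₗ[ℂ] F)) :=
    (ContinuousLinearMap.isClosed_ker V).completeSpace_coe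
  set K := LinearMap.ker (V : E →ₗ[ℂ] F) with hK
  -- the restriction of V to Kᗮ is a linear isometry
  let L : Kᗮ →ₗᵢ[ℂ] F :=
    ⟨V.toLinearMap.comp (Kᗮ.subtype), fun x => hV x x.2⟩
  have hinner : ∀ x y : Kᗮ, ⟪V (x : E), V (y : E)⟫ = ⟪(x : E), (y : E)⟫ := by
    intro x y
    have := L.inner_map_map x y
    exact this
  obtain ⟨f₀, hf₀, f₁, hf₁, rfl⟩ := K.exists_add_mem_mem_orthogonal f
  have hVf₀ : V f₀ = 0 := hf₀
  have hVsum : V (f₀ + f₁) = V f₁ := by rw [map_add, hVf₀, zero_add]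
  have hadj : ContinuousLinearMap.adjoint V (V f₁) = f₁ := by
    apply ext_inner_left ℂ
    intro v
    obtain ⟨v₀, hv₀, v₁, hv₁, rfl⟩ := K.exists_add_mem_mem_orthogonal v
    rw [ContinuousLinearMap.adjoint_inner_right]
    have hVv₀ : V v₀ = 0 := hv₀
    have h1 : ⟪V (v₀ + v₁), V f₁⟫ = ⟪V (v₁ : E), V f₁⟫ := by
      rw [map_add, hVv₀, zero_add]
    have h2 : ⟪V (v₁ : E), V f₁⟫ = ⟪(v₁ : E), f₁⟫ := hinner ⟨v₁, hv₁⟩ ⟨f₁, hf₁⟩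
    have h3 : ⟪v₀, f₁⟫ = 0 := hf₁ v₀ hv₀
    rw [h1, h2, inner_add_left, h3, zero_add]
  rw [hVsum, hadj]

set_option maxHeartbeats 2000000 in
/-- Let `h` be a densely defined multiplier of a CNP space with Beurling pair
`(A, B) = ((a_i), (b_i))`.  For `y ∈ X` the series `Σ a_i(x)·conj(a_i(y))` and
`Σ b_i(x)·conj(b_i(y))` converge, and the functions
`g_y(x) = (Σ a_i(x) conj(a_i(y)))·k(x,y)` and `G_y(x) = (1 − Σ b_i(x) conj(b_i(y)))·k(x,y)`
are the reproducing kernels at `y` of `Dom T` and `Dom T*` for the respective graph inner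
products. -/
theorem statement3 (X H : Type) [NormedAddCommGroup H] [InnerProductSpace ℂ H] [CompleteSpace H]
    (R : RKHSpace X H) (hCNP : R.IsCNP) (h : X → ℂ)
    (hdense : Dense (((R.mulOp h).domain : Submodule ℂ H) : Set H))
    (I : Type) (A B : I → X → ℂ)
    (MΘ : lp (fun _ : I => H) 2 →L[ℂ] WithLp 2 (H × H))
    (hBP : R.IsBeurlingOp h A B MΘ) :
    (∀ x y : X, Summable (fun i => A i x * (starRingEnd ℂ) (A i y)) ∧
      Summable (fun i => B i x * (starRingEnd ℂ) (B i y))) ∧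
    ∀ y : X, ∃ (gy Gy : H),
      R.toFun gy = (fun x => (∑' i, A i x * (starRingEnd ℂ) (A i y)) * R.kFun x y) ∧
      R.toFun Gy = (fun x => (1 - ∑' i, B i x * (starRingEnd ℂ) (B i y)) * R.kFun x y) ∧
      ∃ (hgy : gy ∈ (R.mulOp h).domain) (hGy : Gy ∈ (R.mulOp h).adjoint.domain),
        (∀ (f : H) (hf : f ∈ (R.mulOp h).domain),
          (inner ℂ gy f : ℂ) + inner ℂ (R.mulOp h ⟨gy, hgy⟩) (R.mulOp h ⟨f, hf⟩) = R.toFun f y) ∧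
        (∀ (f : H) (hf : f ∈ (R.mulOp h).adjoint.domain),
          (inner ℂ Gy f : ℂ) + inner ℂ ((R.mulOp h).adjoint ⟨Gy, hGy⟩) ((R.mulOp h).adjoint ⟨f, hf⟩)
            = R.toFun f y) := by
  classical
  obtain ⟨⟨I', u, hu_inj, hu_lt, hk⟩, hconst⟩ := hCNP
  obtain ⟨hSum, hIso, hGraph⟩ := hBP
  have hrepro : ∀ (f : H) (y : X), ⟪R.kernel y, f⟫ = R.toFun f y := fun f y => R.reproducing f y
  have hkerF : ∀ (x y : X), R.toFun (R.kernel y) x = R.kFun x y :=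
    fun x y => (R.reproducing _ _).symm
  have hker_ne : ∀ y : X, R.kernel y ≠ 0 := by
    intro y hy
    have h1 : R.kFun y y = (1 - ⟪u y, u y⟫)⁻¹ := hk y y
    have h2 : R.kFun y y = 0 := by rw [RKHSpace.kFun, hy, inner_zero_right]
    have h3 : (1 - ⟪u y, u y⟫ : ℂ) ≠ 0 := by
      intro h0
      have he : (⟪u y, u y⟫ : ℂ) = 1 := by linear_combination -h0
      have hn : ‖(⟪u y, u y⟫ : ℂ)‖ < 1 := by
        rw [inner_self_eq_norm_sq_to_K]
        have h4 : ‖u y‖ < 1 := hu_lt y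
        have h5 : (0:ℝ) ≤ ‖u y‖ := norm_nonneg _
        rw [norm_pow, RCLike.norm_ofReal, abs_of_nonneg h5]
        nlinarith
      rw [he] at hn; norm_num at hn
    rw [h2] at h1
    exact inv_ne_zero h3 h1.symm
  -- action of MΘ on single tensors
  have hsingle : ∀ (i : I) (f : H) (x : X),
      R.toFun (((WithLp.equiv 2 (H × H)) (MΘ (lp.single 2 i f))).1) x = A i x * R.toFun f x ∧
      R.toFun (((WithLp.equiv 2 (H × H)) (MΘ (lp.single 2 i f))).2) x = B i x * R.toFun f x := by
    intro i f x
    have heq : (fun j => A j x * R.toFun ((lp.single 2 i f : lp (fun _ : I => H) 2) j) x)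
        = fun j => if j = i then A i x * R.toFun f x else 0 := by
      funext j
      by_cases hj : j = i
      · subst hj
        rw [lp.single_apply_self (E := fun _ : I => H), if_pos rfl]
      · rw [lp.single_apply_ne (E := fun _ : I => H) 2 i f hj, if_neg hj, map_zero]
        simp
    have heq' : (fun j => B j x * R.toFun ((lp.single 2 i f : lp (fun _ : I => H) 2) j) x)
        = fun j => if j = i then B i x * R.toFun f x else 0 := by
      funext j
      by_cases hj : j = i
      · subst hj
        rw [lp.single_apply_self (E := fun _ : I => H), if_pos rfl]
      · rw [lp.single_apply_ne (E := fun _ : I => H) 2 i f hj, if_neg hj, map_zero]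
        simp
    constructor
    · exact (hSum (lp.single 2 i f) x).1.unique (by rw [heq]; exact hasSum_ite_eq i _)
    · exact (hSum (lp.single 2 i f) x).2.unique (by rw [heq']; exact hasSum_ite_eq i _)
  -- components of the adjoint applied to (kernel y, 0) and (0, kernel y)
  have hFaComp : ∀ (y : X) (i : I),
      (ContinuousLinearMap.adjoint MΘ ((WithLp.equiv 2 (H × H)).symm (R.kernel y, 0))) i
        = (starRingEnd ℂ) (A i y) • R.kernel y := by
    intro y i
    apply ext_inner_left ℂ
    intro v
    have h1 : ⟪lp.single 2 i v, ContinuousLinearMap.adjoint MΘ ((WithLp.equiv 2 (H × H)).symm (R.kernel y, 0))⟫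
        = ⟪v, (ContinuousLinearMap.adjoint MΘ ((WithLp.equiv 2 (H × H)).symm (R.kernel y, 0))) i⟫ :=
      lp.inner_single_left (𝕜 := ℂ) (G := fun _ : I => H) i v _
    have h2 : ⟪lp.single 2 i v, ContinuousLinearMap.adjoint MΘ ((WithLp.equiv 2 (H × H)).symm (R.kernel y, 0))⟫
        = ⟪MΘ (lp.single 2 i v), (WithLp.equiv 2 (H × H)).symm (R.kernel y, 0)⟫ := by
      exact ContinuousLinearMap.adjoint_inner_right MΘ _ _
    have h3 : ⟪MΘ (lp.single 2 i v), (WithLp.equiv 2 (H × H)).symm (R.kernel y, 0)⟫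
        = ⟪((WithLp.equiv 2 (H × H)) (MΘ (lp.single 2 i v))).1, R.kernel y⟫ := by
      rw [WithLp.prod_inner_apply, WithLp.equiv_symm_apply, WithLp.ofLp_toLp]
      simp only [inner_zero_right, add_zero]
      rfl
    have h4 : ⟪((WithLp.equiv 2 (H × H)) (MΘ (lp.single 2 i v))).1, R.kernel y⟫
        = (starRingEnd ℂ) (A i y * R.toFun v y) := by
      rw [← inner_conj_symm, hrepro, (hsingle i v y).1]
    have h5 : ⟪v, (starRingEnd ℂ) (A i y) • R.kernel y⟫
        = (starRingEnd ℂ) (A i y * R.toFun v y) := by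
      rw [inner_smul_right, ← inner_conj_symm, hrepro, map_mul]
    rw [← h1, h2, h3, h4, h5]
  have hFbComp : ∀ (y : X) (i : I),
      (ContinuousLinearMap.adjoint MΘ ((WithLp.equiv 2 (H × H)).symm (0, R.kernel y))) i
        = (starRingEnd ℂ) (B i y) • R.kernel y := by
    intro y i
    apply ext_inner_left ℂ
    intro v
    have h1 : ⟪lp.single 2 i v, ContinuousLinearMap.adjoint MΘ ((WithLp.equiv 2 (H × H)).symm (0, R.kernel y))⟫
        = ⟪v, (ContinuousLinearMap.adjoint MΘ ((WithLp.equiv 2 (H × H)).symm (0, R.kernel y))) i⟫ :=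
      lp.inner_single_left (𝕜 := ℂ) (G := fun _ : I => H) i v _
    have h2 : ⟪lp.single 2 i v, ContinuousLinearMap.adjoint MΘ ((WithLp.equiv 2 (H × H)).symm (0, R.kernel y))⟫
        = ⟪MΘ (lp.single 2 i v), (WithLp.equiv 2 (H × H)).symm (0, R.kernel y)⟫ := by
      exact ContinuousLinearMap.adjoint_inner_right MΘ _ _
    have h3 : ⟪MΘ (lp.single 2 i v), (WithLp.equiv 2 (H × H)).symm (0, R.kernel y)⟫
        = ⟪((WithLp.equiv 2 (H × H)) (MΘ (lp.single 2 i v))).2, R.kernel y⟫ := by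
      rw [WithLp.prod_inner_apply, WithLp.equiv_symm_apply, WithLp.ofLp_toLp]
      simp only [inner_zero_right, zero_add]
      rfl
    have h4 : ⟪((WithLp.equiv 2 (H × H)) (MΘ (lp.single 2 i v))).2, R.kernel y⟫
        = (starRingEnd ℂ) (B i y * R.toFun v y) := by
      rw [← inner_conj_symm, hrepro, (hsingle i v y).2]
    have h5 : ⟪v, (starRingEnd ℂ) (B i y) • R.kernel y⟫
        = (starRingEnd ℂ) (B i y * R.toFun v y) := by
      rw [inner_smul_right, ← inner_conj_symm, hrepro, map_mul]
    rw [← h1, h2, h3, h4, h5]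
  -- square summability
  have hsq : ∀ (F : lp (fun _ : I => H) 2) (c : I → ℂ) (y : X),
      (∀ i, (F i : H) = (starRingEnd ℂ) (c i) • R.kernel y) →
      Summable (fun i => ‖c i‖ ^ 2) := by
    intro F c y hFc
    have hsum := (lp.memℓp F).summable (by norm_num : 0 < (2 : ℝ≥0∞).toReal)
    have h2 : ∀ i : I, ‖F i‖ ^ (2 : ℝ≥0∞).toReal = ‖c i‖ ^ 2 * ‖R.kernel y‖ ^ 2 := by
      intro i
      rw [hFc i, norm_smul, RCLike.norm_conj]
      have ht : ((2 : ℝ≥0∞)).toReal = ((2 : ℕ) : ℝ) := by norm_num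
      rw [ht, Real.rpow_natCast]
      ring
    have hsum' : Summable (fun i => ‖c i‖ ^ 2 * ‖R.kernel y‖ ^ 2) := by
      simpa only [h2] using hsum
    have hne : ‖R.kernel y‖ ^ 2 ≠ 0 := pow_ne_zero 2 (norm_ne_zero_iff.mpr (hker_ne y))
    exact (summable_mul_right_iff hne).mp hsum'
  have hA2 : ∀ y : X, Summable (fun i => ‖A i y‖ ^ 2) :=
    fun y => hsq _ _ y (hFaComp y)
  have hB2 : ∀ y : X, Summable (fun i => ‖B i y‖ ^ 2) :=
    fun y => hsq _ _ y (hFbComp y)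
  have hCS : ∀ (c d : I → ℂ), Summable (fun i => ‖c i‖ ^ 2) → Summable (fun i => ‖d i‖ ^ 2) →
      Summable (fun i => c i * (starRingEnd ℂ) (d i)) := by
    intro c d hc hd
    apply Summable.of_norm
    refine Summable.of_nonneg_of_le (fun i => norm_nonneg _) (fun i => ?_)
      ((hc.add hd).div_const 2)
    rw [norm_mul, RCLike.norm_conj]
    nlinarith [norm_nonneg (c i), norm_nonneg (d i), sq_nonneg (‖c i‖ - ‖d i‖)]
  refine ⟨fun x y => ⟨hCS _ _ (hA2 x) (hA2 y), hCS _ _ (hB2 x) (hB2 y)⟩, ?_⟩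
  intro y
  -- partial isometry property on the range
  have hProj : ∀ q : WithLp 2 (H × H), (∃ F, MΘ F = q) → MΘ (ContinuousLinearMap.adjoint MΘ q) = q := by
    intro q hq
    exact aux_partial_isometry MΘ hIso hq
  -- graph membership of images
  have hgraphF : ∀ (F : lp (fun _ : I => H) 2),
      ∃ hp : ((WithLp.equiv 2 (H × H)) (MΘ F)).1 ∈ (R.mulOp h).domain,
        R.mulOp h ⟨((WithLp.equiv 2 (H × H)) (MΘ F)).1, hp⟩
          = ((WithLp.equiv 2 (H × H)) (MΘ F)).2 := by
    intro F
    have hmem : (((WithLp.equiv 2 (H × H)) (MΘ F)).1, ((WithLp.equiv 2 (H × H)) (MΘ F)).2)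
        ∈ (R.mulOp h).graph := (hGraph _).mpr ⟨F, rfl⟩
    rw [LinearPMap.mem_graph_iff] at hmem
    obtain ⟨z, hz1, hz2⟩ := hmem
    refine ⟨hz1 ▸ z.2, ?_⟩
    have hze : (⟨((WithLp.equiv 2 (H × H)) (MΘ F)).1, hz1 ▸ z.2⟩ : (R.mulOp h).domain) = z :=
      Subtype.ext hz1.symm
    rw [hze, hz2]
  -- evaluation of the image functions
  have htoFun : ∀ (F : lp (fun _ : I => H) 2) (c : I → ℂ) (x : X),
      (∀ i, (F i : H) = (starRingEnd ℂ) (c i) • R.kernel y) →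
      R.toFun (((WithLp.equiv 2 (H × H)) (MΘ F)).1) x
          = (∑' i, A i x * (starRingEnd ℂ) (c i)) * R.kFun x y ∧
      R.toFun (((WithLp.equiv 2 (H × H)) (MΘ F)).2) x
          = (∑' i, B i x * (starRingEnd ℂ) (c i)) * R.kFun x y := by
    intro F c x hFc
    have hc2 : Summable (fun i => ‖c i‖ ^ 2) := hsq F c y hFc
    have hcomp : ∀ i, R.toFun (F i : H) x = (starRingEnd ℂ) (c i) * R.kFun x y := by
      intro i
      rw [hFc i, map_smul, Pi.smul_apply, smul_eq_mul, hkerF x y]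
    constructor
    · have hsA : Summable (fun i => A i x * (starRingEnd ℂ) (c i)) := hCS _ _ (hA2 x) hc2
      refine (hSum F x).1.unique ?_
      have heq : (fun i => (A i x * (starRingEnd ℂ) (c i)) * R.kFun x y)
          = fun i => A i x * R.toFun (F i : H) x := by
        funext i; rw [hcomp i]; ring
      rw [← heq]
      exact hsA.hasSum.mul_right _
    · have hsB : Summable (fun i => B i x * (starRingEnd ℂ) (c i)) := hCS _ _ (hB2 x) hc2
      refine (hSum F x).2.unique ?_
      have heq : (fun i => (B i x * (starRingEnd ℂ) (c i)) * R.kFun x y)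
          = fun i => B i x * R.toFun (F i : H) x := by
        funext i; rw [hcomp i]; ring
      rw [← heq]
      exact hsB.hasSum.mul_right _
  -- inner products on the product space
  have hinnerW : ∀ (w₁ w₂ : WithLp 2 (H × H)), (inner ℂ w₁ w₂ : ℂ)
      = ⟪((WithLp.equiv 2 (H × H)) w₁).1, ((WithLp.equiv 2 (H × H)) w₂).1⟫
        + ⟪((WithLp.equiv 2 (H × H)) w₁).2, ((WithLp.equiv 2 (H × H)) w₂).2⟫ := by
    intro w₁ w₂
    rw [WithLp.prod_inner_apply]
    rfl
  have hkey : ∀ (w : WithLp 2 (H × H)) (F₂ : lp (fun _ : I => H) 2),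
      (inner ℂ (MΘ (ContinuousLinearMap.adjoint MΘ w)) (MΘ F₂) : ℂ) = inner ℂ w (MΘ F₂) := by
    intro w F₂
    rw [← ContinuousLinearMap.adjoint_inner_right MΘ (ContinuousLinearMap.adjoint MΘ w) (MΘ F₂),
      ContinuousLinearMap.adjoint_inner_left, hProj (MΘ F₂) ⟨F₂, rfl⟩]
  obtain ⟨hgy, hTgy⟩ :=
    hgraphF (ContinuousLinearMap.adjoint MΘ ((WithLp.equiv 2 (H × H)).symm (R.kernel y, 0)))
  obtain ⟨hpb, hTpb⟩ :=
    hgraphF (ContinuousLinearMap.adjoint MΘ ((WithLp.equiv 2 (H × H)).symm (0, R.kernel y)))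
  refine ⟨((WithLp.equiv 2 (H × H)) (MΘ (ContinuousLinearMap.adjoint MΘ ((WithLp.equiv 2 (H × H)).symm (R.kernel y, 0))))).1,
    R.kernel y - ((WithLp.equiv 2 (H × H)) (MΘ (ContinuousLinearMap.adjoint MΘ ((WithLp.equiv 2 (H × H)).symm (0, R.kernel y))))).2,
    ?_, ?_, hgy, ?_⟩
  · funext x
    exact (htoFun _ _ x (hFaComp y)).1
  · funext x
    rw [map_sub, Pi.sub_apply, hkerF x y, (htoFun _ _ x (hFbComp y)).2]
    ring
  · -- adjoint domain membership and the two reproducing identities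
    have hwq : ∀ (x₀ : (R.mulOp h).domain),
        ⟪((WithLp.equiv 2 (H × H)) (MΘ (ContinuousLinearMap.adjoint MΘ ((WithLp.equiv 2 (H × H)).symm (0, R.kernel y))))).1,
          (x₀ : H)⟫
        = ⟪R.kernel y - ((WithLp.equiv 2 (H × H)) (MΘ (ContinuousLinearMap.adjoint MΘ ((WithLp.equiv 2 (H × H)).symm
            (0, R.kernel y))))).2, R.mulOp h x₀⟫ := by
      intro x₀
      obtain ⟨F₂, hF₂⟩ := (hGraph ((x₀ : H), R.mulOp h x₀)).mp ((R.mulOp h).mem_graph x₀)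
      have hfst : ((WithLp.equiv 2 (H × H)) (MΘ F₂)).1 = (x₀ : H) := congrArg Prod.fst hF₂
      have hsnd : ((WithLp.equiv 2 (H × H)) (MΘ F₂)).2 = R.mulOp h x₀ := congrArg Prod.snd hF₂
      have h1 : ⟪((WithLp.equiv 2 (H × H)) (MΘ (ContinuousLinearMap.adjoint MΘ ((WithLp.equiv 2 (H × H)).symm
            (0, R.kernel y))))).1, ((WithLp.equiv 2 (H × H)) (MΘ F₂)).1⟫
          + ⟪((WithLp.equiv 2 (H × H)) (MΘ (ContinuousLinearMap.adjoint MΘ ((WithLp.equiv 2 (H × H)).symm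
            (0, R.kernel y))))).2, ((WithLp.equiv 2 (H × H)) (MΘ F₂)).2⟫
          = ⟪R.kernel y, ((WithLp.equiv 2 (H × H)) (MΘ F₂)).2⟫ := by
        rw [← hinnerW, hkey, hinnerW]
        simp
      rw [hfst] at h1
      rw [hsnd] at h1
      rw [inner_sub_left]
      linear_combination h1
    have hGy : R.kernel y - ((WithLp.equiv 2 (H × H)) (MΘ (ContinuousLinearMap.adjoint MΘ ((WithLp.equiv 2 (H × H)).symm
        (0, R.kernel y))))).2 ∈ (R.mulOp h).adjoint.domain :=
      LinearPMap.mem_adjoint_domain_of_exists _ ⟨_, fun x₀ => hwq x₀⟩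
    have hTGy : (R.mulOp h).adjoint ⟨_, hGy⟩
        = ((WithLp.equiv 2 (H × H)) (MΘ (ContinuousLinearMap.adjoint MΘ ((WithLp.equiv 2 (H × H)).symm (0, R.kernel y))))).1 :=
      LinearPMap.adjoint_apply_eq hdense _ (fun x₀ => hwq x₀)
    refine ⟨hGy, ?_, ?_⟩
    · intro f hf
      obtain ⟨F₂, hF₂⟩ := (hGraph (f, R.mulOp h ⟨f, hf⟩)).mp ((R.mulOp h).mem_graph ⟨f, hf⟩)
      have hfst : ((WithLp.equiv 2 (H × H)) (MΘ F₂)).1 = f := congrArg Prod.fst hF₂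
      have hsnd : ((WithLp.equiv 2 (H × H)) (MΘ F₂)).2 = R.mulOp h ⟨f, hf⟩ :=
        congrArg Prod.snd hF₂
      have hmain : ⟪((WithLp.equiv 2 (H × H)) (MΘ (ContinuousLinearMap.adjoint MΘ
            ((WithLp.equiv 2 (H × H)).symm (R.kernel y, 0))))).1,
            ((WithLp.equiv 2 (H × H)) (MΘ F₂)).1⟫
          + ⟪((WithLp.equiv 2 (H × H)) (MΘ (ContinuousLinearMap.adjoint MΘ
            ((WithLp.equiv 2 (H × H)).symm (R.kernel y, 0))))).2,
            ((WithLp.equiv 2 (H × H)) (MΘ F₂)).2⟫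
          = ⟪R.kernel y, ((WithLp.equiv 2 (H × H)) (MΘ F₂)).1⟫ := by
        rw [← hinnerW, hkey, hinnerW]
        simp
      rw [hfst] at hmain
      rw [hsnd] at hmain
      rw [hrepro] at hmain
      rw [hTgy]
      exact hmain
    · intro f hf
      rw [hTGy]
      have hfa := LinearPMap.adjoint_isFormalAdjoint hdense ⟨f, hf⟩
        ⟨((WithLp.equiv 2 (H × H)) (MΘ (ContinuousLinearMap.adjoint MΘ ((WithLp.equiv 2 (H × H)).symm (0, R.kernel y))))).1,
          hpb⟩
      rw [hTpb] at hfa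
      have h2 : ⟪((WithLp.equiv 2 (H × H)) (MΘ (ContinuousLinearMap.adjoint MΘ ((WithLp.equiv 2 (H × H)).symm
            (0, R.kernel y))))).1, (R.mulOp h).adjoint ⟨f, hf⟩⟫
          = ⟪((WithLp.equiv 2 (H × H)) (MΘ (ContinuousLinearMap.adjoint MΘ ((WithLp.equiv 2 (H × H)).symm
            (0, R.kernel y))))).2, f⟫ := by
        rw [← inner_conj_symm, hfa, inner_conj_symm]
      rw [h2, inner_sub_left, hrepro]
      ring
end
end

section
/- Let H be a CNP space on a set X, let h : X → ℂ be a densely defined multiplier with associated closed operator T and adjoint T*, and let (A, B) = ((a_i)_{i∈I}, (b_i)_{i∈I}) be a Beurling pair for h. Then: (i) for every f ∈ Dom T* and every representing pair (a, b) for h, one has M_b* f = M_a* (T* f); (ii) conversely, if f, g ∈ H satisfy M_{b_i}* f = M_{a_i}* g for every i ∈ I, then f ∈ Dom T* and g = T* f; in particular such g is unique. -/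
noncomputable section

open scoped ComplexConjugate ENNReal

local notation "⟪" x ", " y "⟫" => @inner ℂ _ _ x y

variable {X H : Type} [NormedAddCommGroup H] [InnerProductSpace ℂ H] [CompleteSpace H]

/-- Let `h` be a densely defined multiplier of a CNP space with Beurling pair
`(A, B)`.  (i) For every `f ∈ Dom T*` and every representing pair `(a, b)`, one has
`M_b* f = M_a* (T* f)`, expressed by the identity `⟪f, b·u⟫ = ⟪T* f, a·u⟫` for all `u ∈ H`
(paper convention; here written in Mathlib's convention).  (ii) Conversely if `f, g ∈ H`
satisfy `M_{b_i}* f = M_{a_i}* g` for every `i`, i.e. `⟪f, b_i·u⟫ = ⟪g, a_i·u⟫` for all `u`,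
then `f ∈ Dom T*` and `g = T* f`; in particular such `g` is unique. -/
theorem statement7 (X H : Type) [NormedAddCommGroup H] [InnerProductSpace ℂ H] [CompleteSpace H]
    (R : RKHSpace X H) (hCNP : R.IsCNP) (h : X → ℂ)
    (hdense : Dense (((R.mulOp h).domain : Submodule ℂ H) : Set H))
    (I : Type) (A B : I → X → ℂ)
    (MΘ : lp (fun _ : I => H) 2 →L[ℂ] WithLp 2 (H × H))
    (hBP : R.IsBeurlingOp h A B MΘ) :
    (∀ (f : H) (hf : f ∈ (R.mulOp h).adjoint.domain) (a b : X → ℂ), R.IsRepPair h a b →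
      ∀ (u ua ub : H),
        R.toFun ua = (fun x => a x * R.toFun u x) →
        R.toFun ub = (fun x => b x * R.toFun u x) →
        inner ℂ f ub = inner ℂ ((R.mulOp h).adjoint ⟨f, hf⟩ : H) ua) ∧
    (∀ f g : H,
      (∀ (i : I) (u ua ub : H),
        R.toFun ua = (fun x => A i x * R.toFun u x) →
        R.toFun ub = (fun x => B i x * R.toFun u x) →
        inner ℂ f ub = inner ℂ g ua) →
      ∃ hf : f ∈ (R.mulOp h).adjoint.domain, (R.mulOp h).adjoint ⟨f, hf⟩ = g) := by
  classical
  have hFA := LinearPMap.adjoint_isFormalAdjoint hdense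
  constructor
  · rintro f hf a b ⟨-, -, -, -, hab, -⟩ u ua ub hua hub
    have hmem : ua ∈ (R.mulOp h).domain := by
      refine ⟨ub, funext fun x => ?_⟩
      rw [hub, hua]
      simp only [hab x]
      ring
    have hTua : (R.mulOp h) ⟨ua, hmem⟩ = ub := by
      apply R.injective
      rw [R.mulOp_apply, hub, hua]
      funext x
      simp only [hab x]
      ring
    have := hFA ⟨f, hf⟩ ⟨ua, hmem⟩
    rw [hTua] at this
    exact this.symm
  · intro f g hfg
    have key : ∀ v : (R.mulOp h).domain,
        (inner ℂ g (v : H) : ℂ) = inner ℂ f ((R.mulOp h) v) := by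
      intro v
      obtain ⟨F, hF⟩ := (hBP.2.2 ((v : H), (R.mulOp h) v)).mp ((R.mulOp h).mem_graph v)
      set π1 : WithLp 2 (H × H) →L[ℂ] H :=
        (ContinuousLinearMap.fst ℂ H H).comp
          (WithLp.prodContinuousLinearEquiv 2 ℂ H H : WithLp 2 (H × H) →L[ℂ] H × H) with hπ1
      set π2 : WithLp 2 (H × H) →L[ℂ] H :=
        (ContinuousLinearMap.snd ℂ H H).comp
          (WithLp.prodContinuousLinearEquiv 2 ℂ H H : WithLp 2 (H × H) →L[ℂ] H × H) with hπ2
      have hπ1' : ∀ q : WithLp 2 (H × H), π1 q = ((WithLp.equiv 2 (H × H)) q).1 := fun q => rfl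
      have hπ2' : ∀ q : WithLp 2 (H × H), π2 q = ((WithLp.equiv 2 (H × H)) q).2 := fun q => rfl
      have hper : ∀ i, (inner ℂ f (π2 (MΘ (lp.single 2 i (F i)))) : ℂ)
          = inner ℂ g (π1 (MΘ (lp.single 2 i (F i)))) := by
        intro i
        rw [hπ1', hπ2']
        refine hfg i (F i) _ _ ?_ ?_
        · funext x
          refine (hBP.1 (lp.single 2 i (F i)) x).1.unique ?_
          have h0 : ∀ j, j ≠ i →
              A j x * R.toFun ((lp.single 2 i (F i) : lp (fun _ : I => H) 2) j) x = 0 := by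
            intro j hj
            rw [lp.single_apply_ne 2 i _ hj]
            simp
          simpa [lp.single_apply_self] using hasSum_single i h0
        · funext x
          refine (hBP.1 (lp.single 2 i (F i)) x).2.unique ?_
          have h0 : ∀ j, j ≠ i →
              B j x * R.toFun ((lp.single 2 i (F i) : lp (fun _ : I => H) 2) j) x = 0 := by
            intro j hj
            rw [lp.single_apply_ne 2 i _ hj]
            simp
          simpa [lp.single_apply_self] using hasSum_single i h0
      have hsF : HasSum (fun i => lp.single 2 i (F i)) F :=
        lp.hasSum_single (by norm_num) F
      have hsM : HasSum (fun i => MΘ (lp.single 2 i (F i))) (MΘ F) := MΘ.hasSum hsF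
      have hs1 : HasSum (fun i => (inner ℂ g (π1 (MΘ (lp.single 2 i (F i)))) : ℂ))
          (inner ℂ g (π1 (MΘ F))) := (innerSL ℂ g).hasSum (π1.hasSum hsM)
      have hs2 : HasSum (fun i => (inner ℂ f (π2 (MΘ (lp.single 2 i (F i)))) : ℂ))
          (inner ℂ f (π2 (MΘ F))) := (innerSL ℂ f).hasSum (π2.hasSum hsM)
      have : (inner ℂ f (π2 (MΘ F)) : ℂ) = inner ℂ g (π1 (MΘ F)) := by
        refine HasSum.unique ?_ hs1
        convert hs2 using 1
        funext i
        exact (hper i).symm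
      rw [hπ1', hπ2', hF] at this
      exact this.symm
    have hfmem : f ∈ (R.mulOp h).adjoint.domain :=
      LinearPMap.mem_adjoint_domain_of_exists f ⟨g, fun v => key v⟩
    exact ⟨hfmem, LinearPMap.adjoint_apply_eq hdense ⟨f, hfmem⟩ (fun v => key v)⟩
end
end

section
/- Let H be a CNP space on a set X, let h : X → ℂ be a densely defined multiplier of H, and let (a, b) be a representing pair for h. Then b belongs to [a], the closed Mult H-invariant subspace of H generated by a; that is, b lies in the closure in H of the set {φ·a : φ a multiplier of H}. -/
noncomputable section

open scoped ComplexConjugate ENNReal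

local notation "⟪" x ", " y "⟫" => @inner ℂ _ _ x y

variable {X H : Type} [NormedAddCommGroup H] [InnerProductSpace ℂ H] [CompleteSpace H]

section Aux

variable {X H : Type} [NormedAddCommGroup H] [InnerProductSpace ℂ H] [CompleteSpace H]

namespace RKHSpace

theorem toFun_kernel' (R : RKHSpace X H) (y x : X) :
    R.toFun (R.kernel y) x = ⟪R.kernel x, R.kernel y⟫ :=
  (R.reproducing (R.kernel y) x).symm

/-- The span of the kernel vectors is dense. -/
theorem dense_span_kernel (R : RKHSpace X H) :
    Dense ((Submodule.span ℂ (Set.range R.kernel) : Submodule ℂ H) : Set H) := by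
  set K := Submodule.span ℂ (Set.range R.kernel) with hK
  have htop : K.topologicalClosure = ⊤ := by
    rw [Submodule.topologicalClosure_eq_top_iff, Submodule.eq_bot_iff]
    intro f hf
    apply R.injective
    rw [map_zero]
    funext x
    have h0 : ⟪R.kernel x, f⟫ = 0 :=
      (Submodule.mem_orthogonal K f).mp hf (R.kernel x)
        (Submodule.subset_span ⟨x, rfl⟩)
    rw [← R.reproducing f x, h0]; rfl
  have := congrArg (fun (p : Submodule ℂ H) => (p : Set H)) htop
  simp only [Submodule.topologicalClosure_coe, Submodule.top_coe] at this
  rw [dense_iff_closure_eq, this]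

/-- Key positivity estimate: for a CNP kernel, the column of the multiplier
`ψ(x) = ⟪c, u x⟫` is bounded by `‖c‖` on finite combinations of kernel vectors. -/
theorem key_ineq (R : RKHSpace X H) {I : Type} (u : X → lp (fun _ : I => ℂ) 2)
    (hu1 : ∀ x, ‖u x‖ < 1)
    (hk : ∀ x y : X, R.kFun x y = (1 - ⟪u y, u x⟫)⁻¹)
    (c : lp (fun _ : I => ℂ) 2) (s : Finset X) (d : X → ℂ) :
    ‖∑ x ∈ s, (d x * (starRingEnd ℂ) ⟪c, u x⟫) • R.kernel x‖ ≤
      ‖c‖ * ‖∑ x ∈ s, d x • R.kernel x‖ := by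
  rcases eq_or_ne c 0 with rfl | hc
  · simp only [inner_zero_left, map_zero, mul_zero, zero_smul, Finset.sum_const_zero,
      norm_zero]
    positivity
  set t : ℝ := ‖c‖ with ht
  have ht0 : 0 < t := norm_pos_iff.mpr hc
  have htne : ((t : ℂ)) ≠ 0 := by
    simpa using ht0.ne'
  set ψ : X → ℂ := fun x => ⟪c, u x⟫ with hψ
  set Rv : lp (fun _ : I => ℂ) 2 → lp (fun _ : I => ℂ) 2 :=
    fun v => (t : ℂ) • v - ((t : ℂ)⁻¹ * ⟪c, v⟫) • c with hRv
  have hcc : ⟪c, c⟫ = ((t : ℂ)) ^ 2 := by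
    rw [inner_self_eq_norm_sq_to_K, ht]
    norm_num
  have hRinner : ∀ v w, ⟪Rv v, Rv w⟫ = (t : ℂ) ^ 2 * ⟪v, w⟫ - ⟪c, w⟫ * ⟪v, c⟫ := by
    intro v w
    simp only [hRv, inner_sub_left, inner_sub_right, inner_smul_left, inner_smul_right,
      map_mul, map_inv₀, Complex.conj_ofReal, inner_conj_symm, hcc]
    field_simp
    ring
  -- pointwise kernel identity
  have hKid : ∀ x y : X, ((t : ℂ) ^ 2 - ψ x * (starRingEnd ℂ) (ψ y)) *
      ⟪R.kernel x, R.kernel y⟫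
      = (t : ℂ) ^ 2 + ⟪Rv (u y), Rv (u x)⟫ * ⟪R.kernel x, R.kernel y⟫ := by
    intro x y
    have hG : ‖(⟪u y, u x⟫ : ℂ)‖ < 1 :=
      lt_of_le_of_lt (norm_inner_le_norm _ _)
        (by nlinarith [hu1 x, hu1 y, norm_nonneg (u x), norm_nonneg (u y)])
    have hG1 : (1 : ℂ) - ⟪u y, u x⟫ ≠ 0 := by
      intro hcon
      rw [sub_eq_zero] at hcon
      rw [← hcon] at hG
      simp at hG
    have hKxy : ⟪R.kernel x, R.kernel y⟫ = (1 - ⟪u y, u x⟫)⁻¹ := hk x y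
    have hconj : (starRingEnd ℂ) (ψ y) = ⟪u y, c⟫ := by
      rw [hψ]; exact inner_conj_symm _ _
    rw [hKxy, hRinner, hconj, hψ]
    field_simp
    ring
  set F : H := ∑ x ∈ s, d x • R.kernel x with hF
  set G : H := ∑ x ∈ s, (d x * (starRingEnd ℂ) (ψ x)) • R.kernel x with hG
  have expand : ∀ α β : X → ℂ,
      ⟪∑ x ∈ s, α x • R.kernel x, ∑ y ∈ s, β y • R.kernel y⟫ =
        ∑ x ∈ s, ∑ y ∈ s, (starRingEnd ℂ) (α x) * β y * ⟪R.kernel x, R.kernel y⟫ := by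
    intro α β
    rw [sum_inner]
    refine Finset.sum_congr rfl fun x _ => ?_
    rw [inner_sum]
    refine Finset.sum_congr rfl fun y _ => ?_
    rw [inner_smul_left, inner_smul_right]
    ring
  set D : ℂ := (t : ℂ) ^ 2 * ⟪F, F⟫ - ⟪G, G⟫ with hD
  set E : ℂ := ∑ x ∈ s, ∑ y ∈ s, ((starRingEnd ℂ) (d x) * d y) *
      (⟪Rv (u y), Rv (u x)⟫ * ⟪R.kernel x, R.kernel y⟫) with hE
  have hD1 : D = ∑ x ∈ s, ∑ y ∈ s, ((starRingEnd ℂ) (d x) * d y) *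
      (((t:ℂ)^2 - ψ x * (starRingEnd ℂ) (ψ y)) * ⟪R.kernel x, R.kernel y⟫) := by
    rw [hD, hF, hG, expand, expand, Finset.mul_sum, ← Finset.sum_sub_distrib]
    refine Finset.sum_congr rfl fun x _ => ?_
    rw [Finset.mul_sum, ← Finset.sum_sub_distrib]
    refine Finset.sum_congr rfl fun y _ => ?_
    simp only [map_mul, Complex.conj_conj]
    ring
  have hD2 : D = (t:ℂ)^2 * ((starRingEnd ℂ) (∑ x ∈ s, d x) * (∑ y ∈ s, d y)) + E := by
    rw [hD1, hE]
    have step1 : ∀ x ∈ s, ∀ y ∈ s, ((starRingEnd ℂ) (d x) * d y) *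
        (((t:ℂ)^2 - ψ x * (starRingEnd ℂ) (ψ y)) * ⟪R.kernel x, R.kernel y⟫)
        = (t:ℂ)^2 * ((starRingEnd ℂ) (d x) * d y) +
          ((starRingEnd ℂ) (d x) * d y) * (⟪Rv (u y), Rv (u x)⟫ * ⟪R.kernel x, R.kernel y⟫) := by
      intro x _ y _
      rw [hKid x y]
      ring
    calc (∑ x ∈ s, ∑ y ∈ s, ((starRingEnd ℂ) (d x) * d y) *
        (((t:ℂ)^2 - ψ x * (starRingEnd ℂ) (ψ y)) * ⟪R.kernel x, R.kernel y⟫))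
        = ∑ x ∈ s, ∑ y ∈ s, ((t:ℂ)^2 * ((starRingEnd ℂ) (d x) * d y) +
            ((starRingEnd ℂ) (d x) * d y) * (⟪Rv (u y), Rv (u x)⟫ * ⟪R.kernel x, R.kernel y⟫)) := by
          refine Finset.sum_congr rfl fun x hx => Finset.sum_congr rfl fun y hy => ?_
          exact step1 x hx y hy
      _ = _ := by
          simp only [Finset.sum_add_distrib]
          congr 1
          rw [map_sum, Finset.sum_mul_sum, Finset.mul_sum]
          refine Finset.sum_congr rfl fun x _ => ?_
          rw [Finset.mul_sum]
  set w : I → H := fun m => ∑ x ∈ s, (d x * (starRingEnd ℂ) ((Rv (u x)) m)) • R.kernel x with hw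
  have hterm : ∀ x y : X, HasSum (fun m : I =>
        ((starRingEnd ℂ) (d x) * d y) * (((starRingEnd ℂ) ((Rv (u y)) m) * ((Rv (u x)) m)) *
          ⟪R.kernel x, R.kernel y⟫))
      (((starRingEnd ℂ) (d x) * d y) * (⟪Rv (u y), Rv (u x)⟫ * ⟪R.kernel x, R.kernel y⟫)) := by
    intro x y
    have h0 : HasSum (fun m : I => (starRingEnd ℂ) ((Rv (u y)) m) * ((Rv (u x)) m))
        ⟪Rv (u y), Rv (u x)⟫ := by
      have h' := lp.hasSum_inner (𝕜 := ℂ) (Rv (u y)) (Rv (u x))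
      simpa [RCLike.inner_apply, mul_comm] using h'
    have h1 := (h0.mul_right ⟪R.kernel x, R.kernel y⟫).mul_left ((starRingEnd ℂ) (d x) * d y)
    simpa [mul_assoc] using h1
  have hEsum : HasSum (fun m : I => ∑ x ∈ s, ∑ y ∈ s,
      ((starRingEnd ℂ) (d x) * d y) * (((starRingEnd ℂ) ((Rv (u y)) m) * ((Rv (u x)) m)) *
        ⟪R.kernel x, R.kernel y⟫)) E := by
    rw [hE]
    exact hasSum_sum (fun x _ => hasSum_sum (fun y _ => hterm x y))
  have key : ∀ v : H, (⟪v, v⟫ : ℂ).re = ‖v‖ ^ 2 := fun v => by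
    rw [← RCLike.re_to_complex]
    exact inner_self_eq_norm_sq v
  have hwm : ∀ m : I, (∑ x ∈ s, ∑ y ∈ s,
      ((starRingEnd ℂ) (d x) * d y) * (((starRingEnd ℂ) ((Rv (u y)) m) * ((Rv (u x)) m)) *
        ⟪R.kernel x, R.kernel y⟫))
      = ⟪w m, w m⟫ := by
    intro m
    rw [hw, expand]
    refine Finset.sum_congr rfl fun x _ => Finset.sum_congr rfl fun y _ => ?_
    simp only [map_mul, Complex.conj_conj]
    ring
  have hEsum' : HasSum (fun m : I => (⟪w m, w m⟫ : ℂ)) E := by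
    have h2 := hEsum
    simp only [hwm] at h2
    exact h2
  have hre : HasSum (fun m : I => ‖w m‖ ^ 2) E.re := by
    have h2 := hEsum'.mapL Complex.reCLM
    simpa [key, ← Complex.ofReal_pow] using h2
  have hEre : 0 ≤ E.re := hre.nonneg fun m => by positivity
  have hDre : D.re = t^2 * Complex.normSq (∑ x ∈ s, d x) + E.re := by
    rw [hD2, mul_comm ((starRingEnd ℂ) (∑ x ∈ s, d x)), Complex.mul_conj,
      ← Complex.ofReal_pow, ← Complex.ofReal_mul, Complex.add_re, Complex.ofReal_re]
  have hDval : t^2*‖F‖^2 - ‖G‖^2 = D.re := by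
    rw [hD, Complex.sub_re, ← Complex.ofReal_pow, Complex.re_ofReal_mul, key F, key G]
  have hfin : ‖G‖^2 ≤ (t * ‖F‖)^2 := by
    nlinarith [hEre, Complex.normSq_nonneg (∑ x ∈ s, d x), hDre, hDval, sq_nonneg t]
  have h1 : ‖G‖ ≤ t * ‖F‖ := by
    have h2 := Real.sqrt_le_sqrt hfin
    rwa [Real.sqrt_sq (norm_nonneg G), Real.sqrt_sq (by positivity)] at h2
  exact h1

/-- For a CNP kernel, `ψ(x) = ⟪c, u x⟫` is a multiplier of norm at most `‖c‖`. -/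
theorem exists_multOp_inner (R : RKHSpace X H) {I : Type} (u : X → lp (fun _ : I => ℂ) 2)
    (hu1 : ∀ x, ‖u x‖ < 1)
    (hk : ∀ x y : X, R.kFun x y = (1 - ⟪u y, u x⟫)⁻¹)
    (c : lp (fun _ : I => ℂ) 2) :
    ∃ M : H →L[ℂ] H, R.IsMultOp (fun x => ⟪c, u x⟫) M ∧ ‖M‖ ≤ ‖c‖ := by
  classical
  set ψ : X → ℂ := fun x => ⟪c, u x⟫ with hψ
  set Φ : (X →₀ ℂ) →ₗ[ℂ] H := Finsupp.linearCombination ℂ R.kernel with hΦ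
  set Ψ : (X →₀ ℂ) →ₗ[ℂ] H :=
    Finsupp.linearCombination ℂ (fun x => (starRingEnd ℂ) (ψ x) • R.kernel x) with hΨ
  have hbound : ∀ d : X →₀ ℂ, ‖Ψ d‖ ≤ ‖c‖ * ‖Φ d‖ := by
    intro d
    have hΦd : Φ d = ∑ x ∈ d.support, d x • R.kernel x := by
      rw [hΦ, Finsupp.linearCombination_apply, Finsupp.sum]
    have hΨd : Ψ d = ∑ x ∈ d.support, (d x * (starRingEnd ℂ) (ψ x)) • R.kernel x := by
      rw [hΨ, Finsupp.linearCombination_apply, Finsupp.sum]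
      refine Finset.sum_congr rfl fun x _ => ?_
      rw [smul_smul]
    rw [hΦd, hΨd]
    exact R.key_ineq u hu1 hk c d.support d
  have hker : LinearMap.ker Φ ≤ LinearMap.ker Ψ := by
    intro d hd
    rw [LinearMap.mem_ker] at hd ⊢
    have h1 := hbound d
    rw [hd, norm_zero, mul_zero] at h1
    exact norm_le_zero_iff.mp h1
  set Kr : Submodule ℂ H := LinearMap.range Φ with hKr
  set A : Kr →ₗ[ℂ] H :=
    ((LinearMap.ker Φ).liftQ Ψ hker).comp (Φ.quotKerEquivRange).symm.toLinearMap with hA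
  have hAapp : ∀ d : X →₀ ℂ, ∀ hm : Φ d ∈ Kr, A ⟨Φ d, hm⟩ = Ψ d := by
    intro d hm
    have h1 : (Φ.quotKerEquivRange) (Submodule.Quotient.mk d) = ⟨Φ d, hm⟩ := by
      apply Subtype.ext
      exact Φ.quotKerEquivRange_apply_mk d
    rw [hA]
    simp only [LinearMap.comp_apply, LinearEquiv.coe_coe]
    rw [← h1, LinearEquiv.symm_apply_apply]
    exact Submodule.liftQ_apply _ _ _
  have hAbound : ∀ g : Kr, ‖A g‖ ≤ ‖c‖ * ‖g‖ := by
    rintro ⟨g, hg⟩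
    obtain ⟨d, rfl⟩ := hg
    rw [hAapp d (LinearMap.mem_range_self Φ d)]
    exact hbound d
  set Acont : Kr →L[ℂ] H := A.mkContinuous ‖c‖ hAbound with hAcont
  have hdenseKr : Dense (Kr : Set H) := by
    have h1 : Kr = Submodule.span ℂ (Set.range R.kernel) := by
      rw [hKr, hΦ, Finsupp.range_linearCombination]
    rw [h1]
    exact R.dense_span_kernel
  have hdr : DenseRange (Kr.subtypeL) := hdenseKr.denseRange_val
  have hui : IsUniformInducing (Kr.subtypeL) :=
    (isometry_subtype_coe).isUniformInducing
  set Astar : H →L[ℂ] H := Acont.extend Kr.subtypeL with hAstar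
  have hAstarK : ∀ x : X, Astar (R.kernel x) = (starRingEnd ℂ) (ψ x) • R.kernel x := by
    intro x
    have hd : Φ (Finsupp.single x 1) = R.kernel x := by
      rw [hΦ, Finsupp.linearCombination_single, one_smul]
    have hmem : R.kernel x ∈ Kr := ⟨Finsupp.single x 1, hd⟩
    have h4 : (⟨R.kernel x, hmem⟩ : Kr) = ⟨Φ (Finsupp.single x 1), hd ▸ hmem⟩ :=
      Subtype.ext hd.symm
    have h5 : Astar (R.kernel x) = A ⟨R.kernel x, hmem⟩ := by
      show (Acont.extend Kr.subtypeL) (Kr.subtypeL ⟨R.kernel x, hmem⟩) =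
        A ⟨R.kernel x, hmem⟩
      rw [ContinuousLinearMap.extend_eq (h_dense := hdr) (h_e := hui)]
      rfl
    rw [h5, h4, hAapp (Finsupp.single x 1) _, hΨ, Finsupp.linearCombination_single, one_smul]
  have hAstar_norm : ‖Astar‖ ≤ ‖c‖ := by
    have h1 : ∀ v : Kr, ‖v‖ ≤ (1 : NNReal) * ‖Kr.subtypeL v‖ := by
      intro v
      rw [NNReal.coe_one, one_mul]
      rfl
    have h2 := Acont.opNorm_extend_le (e := Kr.subtypeL) (h_dense := hdr) (h_e := h1)
    calc ‖Astar‖ ≤ (1 : NNReal) * ‖Acont‖ := h2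
      _ = ‖Acont‖ := by norm_num
      _ ≤ ‖c‖ := A.mkContinuous_norm_le (norm_nonneg c) hAbound
  refine ⟨ContinuousLinearMap.adjoint Astar, ?_, ?_⟩
  · intro f
    funext x
    rw [← R.reproducing, ContinuousLinearMap.adjoint_inner_right, hAstarK x,
      inner_smul_left, Complex.conj_conj, R.reproducing]
  · calc ‖ContinuousLinearMap.adjoint Astar‖ = ‖Astar‖ :=
        ContinuousLinearMap.adjoint.norm_map Astar
      _ ≤ ‖c‖ := hAstar_norm

/-- In a CNP space, each kernel function is a multiplier. -/
theorem isMult_kernelFun (R : RKHSpace X H) {I : Type} (u : X → lp (fun _ : I => ℂ) 2)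
    (hu1 : ∀ x, ‖u x‖ < 1)
    (hk : ∀ x y : X, R.kFun x y = (1 - ⟪u y, u x⟫)⁻¹) (y : X) :
    R.IsMult (fun x => R.toFun (R.kernel y) x) := by
  obtain ⟨M, hM, hMn⟩ := R.exists_multOp_inner u hu1 hk (u y)
  have hMlt : ‖M‖ < 1 := lt_of_le_of_lt hMn (hu1 y)
  intro f
  have hb : ∀ n : ℕ, ‖(M ^ n) f‖ ≤ ‖M‖ ^ n * ‖f‖ := by
    intro n
    induction n with
    | zero => simp
    | succ n ih =>
      have h1 : (M ^ (n + 1)) f = M ((M ^ n) f) := by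
        rw [pow_succ']
        rfl
      calc ‖(M ^ (n + 1)) f‖ = ‖M ((M ^ n) f)‖ := by rw [h1]
        _ ≤ ‖M‖ * ‖(M ^ n) f‖ := M.le_opNorm _
        _ ≤ ‖M‖ * (‖M‖ ^ n * ‖f‖) := by
            exact mul_le_mul_of_nonneg_left ih (norm_nonneg M)
        _ = ‖M‖ ^ (n + 1) * ‖f‖ := by ring
  have hsum : Summable (fun n : ℕ => (M ^ n) f) := by
    refine Summable.of_norm_bounded ?_ hb
    exact (summable_geometric_of_lt_one (norm_nonneg M) hMlt).mul_right _
  refine ⟨∑' n : ℕ, (M ^ n) f, ?_⟩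
  funext x
  have hg : ‖(⟪u y, u x⟫ : ℂ)‖ < 1 :=
    lt_of_le_of_lt (norm_inner_le_norm _ _)
      (by nlinarith [hu1 x, hu1 y, norm_nonneg (u x), norm_nonneg (u y)])
  have h2 : ∀ n : ℕ, ⟪R.kernel x, (M ^ n) f⟫ = (⟪u y, u x⟫ : ℂ) ^ n * ⟪R.kernel x, f⟫ := by
    intro n
    induction n with
    | zero => simp
    | succ n ih =>
      have h1 : (M ^ (n + 1)) f = M ((M ^ n) f) := by
        rw [pow_succ']
        rfl
      rw [h1, R.reproducing, hM ((M ^ n) f)]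
      show (⟪u y, u x⟫ : ℂ) * R.toFun ((M ^ n) f) x = _
      rw [← R.reproducing, ih]
      ring
  have h3 : HasSum (fun n : ℕ => ⟪R.kernel x, (M ^ n) f⟫)
      ⟪R.kernel x, ∑' n : ℕ, (M ^ n) f⟫ :=
    hsum.hasSum.mapL (innerSL ℂ (R.kernel x))
  have h4 : HasSum (fun n : ℕ => (⟪u y, u x⟫ : ℂ) ^ n * ⟪R.kernel x, f⟫)
      ((1 - ⟪u y, u x⟫)⁻¹ * ⟪R.kernel x, f⟫) :=
    (hasSum_geometric_of_norm_lt_one hg).mul_right _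
  have h5 : ⟪R.kernel x, ∑' n : ℕ, (M ^ n) f⟫ = (1 - ⟪u y, u x⟫)⁻¹ * ⟪R.kernel x, f⟫ := by
    refine HasSum.unique ?_ h4
    have h6 := h3
    simp only [h2] at h6
    exact h6
  rw [← R.reproducing, h5, ← R.reproducing f x]
  have h8 : (fun x => R.toFun (R.kernel y) x) x = (1 - ⟪u y, u x⟫)⁻¹ := by
    show R.toFun (R.kernel y) x = _
    rw [R.toFun_kernel']
    exact hk x y
  rw [h8]

end RKHSpace

end Aux


/-- Let `h` be a densely defined multiplier of a CNP space `H` and let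
`(a, b)` be a representing pair for `h`.  Then `b`, viewed as an element of `H`, belongs to
`[a]`, the closed `Mult H`-invariant subspace of `H` generated by `a`: the closure of the span
of `{φ·a : φ ∈ Mult H}`. -/
theorem statement19 (X H : Type) [NormedAddCommGroup H] [InnerProductSpace ℂ H] [CompleteSpace H]
    (R : RKHSpace X H) (hCNP : R.IsCNP) (h : X → ℂ)
    (hdense : Dense (((R.mulOp h).domain : Submodule ℂ H) : Set H))
    (a b : X → ℂ) (hab : R.IsRepPair h a b) (gb : H) (hgb : R.toFun gb = b) :
    gb ∈ closure ((Submodule.span ℂ {g : H | ∃ φ : X → ℂ, R.IsMult φ ∧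
      R.toFun g = fun x => φ x * a x} : Submodule ℂ H) : Set H) := by
  classical
  obtain ⟨⟨I, u, huinj, hu1, hk⟩, hconst⟩ := hCNP
  obtain ⟨ha_mult, hb_mult, ha0, hb0, hba, hcontr⟩ := hab
  set S : Set H := {g : H | ∃ φ : X → ℂ, R.IsMult φ ∧
      R.toFun g = fun x => φ x * a x} with hS
  set Ma : H → H := fun f => Classical.choose (ha_mult f) with hMa
  have PMa : ∀ f : H, R.toFun (Ma f) = fun x => a x * R.toFun f x :=
    fun f => Classical.choose_spec (ha_mult f)
  set Mb : H → H := fun f => Classical.choose (hb_mult f) with hMb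
  have PMb : ∀ f : H, R.toFun (Mb f) = fun x => b x * R.toFun f x :=
    fun f => Classical.choose_spec (hb_mult f)
  have hnorm : ∀ f : H, ‖Ma f‖ ^ 2 + ‖Mb f‖ ^ 2 ≤ ‖f‖ ^ 2 :=
    fun f => hcontr f (Ma f) (Mb f) (PMa f) (PMb f)
  have hMaLip : ∀ f : H, ‖Ma f‖ ≤ ‖f‖ := by
    intro f
    nlinarith [hnorm f, sq_nonneg (‖Ma f‖ + ‖f‖), norm_nonneg (Ma f), norm_nonneg f,
      sq_nonneg ‖Mb f‖]
  have hMbLip : ∀ f : H, ‖Mb f‖ ≤ ‖f‖ := by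
    intro f
    nlinarith [hnorm f, sq_nonneg (‖Mb f‖ + ‖f‖), norm_nonneg (Mb f), norm_nonneg f,
      sq_nonneg ‖Ma f‖]
  have hMasub : ∀ v w : H, Ma v - Ma w = Ma (v - w) := by
    intro v w
    apply R.injective
    rw [map_sub]
    funext x
    simp only [PMa, Pi.sub_apply, map_sub]
    ring
  have hMbsub : ∀ v w : H, Mb v - Mb w = Mb (v - w) := by
    intro v w
    apply R.injective
    rw [map_sub]
    funext x
    simp only [PMb, Pi.sub_apply, map_sub]
    ring
  have hMasmul : ∀ (t : ℂ) (v : H), Ma (t • v) = t • Ma v := by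
    intro t v
    apply R.injective
    rw [map_smul]
    funext x
    simp only [PMa, Pi.smul_apply, map_smul, smul_eq_mul]
    ring
  have claim1 : ∀ v ∈ Submodule.span ℂ (Set.range R.kernel),
      Ma v ∈ Submodule.span ℂ S := by
    intro v hv
    induction hv using Submodule.span_induction with
    | mem g hg =>
        obtain ⟨y, rfl⟩ := hg
        apply Submodule.subset_span
        refine ⟨fun x => R.toFun (R.kernel y) x, R.isMult_kernelFun u hu1 hk y, ?_⟩
        rw [PMa]
        funext x
        ring
    | zero =>
        have h0 : Ma 0 = 0 := by
          apply R.injective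
          rw [map_zero]
          funext x
          simp only [PMa, map_zero]
          simp
        rw [h0]
        exact Submodule.zero_mem _
    | add v w hv hw ihv ihw =>
        have hadd : Ma (v + w) = Ma v + Ma w := by
          apply R.injective
          rw [map_add]
          funext x
          simp only [PMa, Pi.add_apply, map_add]
          ring
        rw [hadd]
        exact Submodule.add_mem _ ihv ihw
    | smul t v hv ihv =>
        rw [hMasmul]
        exact Submodule.smul_mem _ _ ihv
  have claim2 : ∀ v : H, Ma v ∈ closure ((Submodule.span ℂ S : Submodule ℂ H) : Set H) := by
    intro v
    rw [Metric.mem_closure_iff]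
    intro ε hε
    obtain ⟨w, hw, hwd⟩ := Metric.mem_closure_iff.mp (R.dense_span_kernel v) ε hε
    refine ⟨Ma w, claim1 w hw, ?_⟩
    rw [dist_eq_norm, hMasub]
    calc ‖Ma (v - w)‖ ≤ ‖v - w‖ := hMaLip _
      _ = dist v w := (dist_eq_norm v w).symm
      _ < ε := hwd
  obtain ⟨e₁, he₁⟩ := hconst 1
  have hgb1 : gb = Mb e₁ := by
    apply R.injective
    rw [hgb, PMb e₁, he₁]
    funext x
    simp
  rw [Metric.mem_closure_iff]
  intro ε hε
  obtain ⟨f, hf, hfd⟩ := Metric.mem_closure_iff.mp (hdense e₁) (ε/2) (by positivity)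
  have hfdom : f ∈ R.mulDomain h := hf
  obtain ⟨Tf, hTf⟩ := hfdom
  have hMbf : Mb f = Ma Tf := by
    apply R.injective
    rw [PMb, PMa, hTf]
    funext x
    rw [hba x]
    ring
  have h9 : dist gb (Mb f) < ε / 2 := by
    rw [hgb1, dist_eq_norm, hMbsub]
    calc ‖Mb (e₁ - f)‖ ≤ ‖e₁ - f‖ := hMbLip _
      _ = dist e₁ f := (dist_eq_norm e₁ f).symm
      _ < ε / 2 := hfd
  obtain ⟨p, hp, hpd⟩ := Metric.mem_closure_iff.mp (claim2 Tf) (ε/2) (by positivity)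
  refine ⟨p, hp, ?_⟩
  calc dist gb p ≤ dist gb (Ma Tf) + dist (Ma Tf) p := dist_triangle _ _ _
    _ = dist gb (Mb f) + dist (Ma Tf) p := by rw [hMbf]
    _ < ε / 2 + ε / 2 := add_lt_add h9 hpd
    _ = ε := by ring
end
end
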